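/- arXiv:1611.07875 — 3 statements merged into one kernel-verified Lean document; each statement's English description precedes it below -/
import Mathlib

section
/- Let Γ ⊆ ℝ² be a compact arcwise connected set with H¹(Γ) < ∞ and diam(Γ) > 0. For every ρ > 0 with ρ < diam(Γ), there exists a finite set J of points of Γ such that Γ ⊆ ⋃_{x∈J} closed ball B̄(x,ρ) and card(J) ≤ min{ 5·H¹(Γ)/ρ , 25·diam(Γ)²/ρ² }. -/
open MeasureTheory Set Metric
open scoped ENNReal Topology

abbrev E2 := EuclideanSpace ℝ (Fin 2)

/-!
Take a maximal `ρ`-separated subset `J` of `Γ`; it exists and is finite because `Γ` is totally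
bounded, and by maximality the closed `ρ`-balls around `J` cover `Γ`. The balls of radius `ρ/2`
around the points of `J` are pairwise disjoint. Since `Γ` is path connected and
`ρ < diam Γ`, each of them meets `Γ` in a set of `H¹`-measure at least `ρ/2` (the distance to the
centre is a 1-Lipschitz map onto `[0, ρ/2]`), so `card J ≤ 2 H¹(Γ)/ρ`. They also lie in a ball of
radius `diam Γ + ρ/2`, and comparing Lebesgue measures gives
`card J ≤ (2 diam Γ + ρ)²/ρ² ≤ 9 diam(Γ)²/ρ²`.
-/

open scoped NNReal

namespace Metric

lemma IsSeparated.lt_dist {X : Type*} [PseudoMetricSpace X] {ε : ℝ≥0} {s : Set X}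
    (hs : IsSeparated ε s) {x y : X} (hx : x ∈ s) (hy : y ∈ s) (hxy : x ≠ y) :
    (ε : ℝ) < dist x y := by
  have h : (ε : ℝ≥0∞) < edist x y := hs hx hy hxy
  rw [edist_dist, ← ENNReal.ofReal_coe_nnreal] at h
  exact (ENNReal.ofReal_lt_ofReal_iff_of_nonneg ε.2).1 h

lemma exists_le_dist_of_two_mul_lt_diam {X : Type*} [PseudoMetricSpace X] {s : Set X} {r : ℝ}
    (hr : 0 ≤ r) (h : 2 * r < diam s) (x : X) : ∃ y ∈ s, r ≤ dist y x := by
  by_contra! hs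
  exact (diam_le_of_subset_closedBall hr fun y hy ↦ (hs y hy).le).not_gt h

end Metric

theorem TotallyBounded.packingNumber_ne_top {X : Type*} [PseudoEMetricSpace X] {A : Set X}
    (hA : TotallyBounded A) {ε : ℝ≥0} (hε : ε ≠ 0) : packingNumber ε A ≠ ⊤ := by
  obtain ⟨N, -, hN, hAN⟩ := exists_finite_isCover_of_totallyBounded (ε := ε / 2) (by simpa) hA
  have h := (packingNumber_two_mul_le_externalCoveringNumber (ε / 2) A).trans
    hAN.externalCoveringNumber_le_encard
  rw [mul_div_cancel₀ ε two_ne_zero] at h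
  exact ne_top_of_le_ne_top hN.encard_lt_top.ne h

theorem TotallyBounded.exists_finset_isSeparated_isCover {X : Type*} [PseudoEMetricSpace X]
    {A : Set X} (hA : TotallyBounded A) {ε : ℝ≥0} (hε : ε ≠ 0) :
    ∃ J : Finset X, ↑J ⊆ A ∧ IsSeparated ε (J : Set X) ∧ IsCover ε A J := by
  have h := hA.packingNumber_ne_top hε
  have hfin : (maximalSeparatedSet ε A).Finite := by
    rw [← Set.encard_ne_top_iff, encard_maximalSeparatedSet h]
    exact h
  exact ⟨hfin.toFinset, by simpa using maximalSeparatedSet_subset,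
    by simpa using isSeparated_maximalSeparatedSet, by simpa using isCover_maximalSeparatedSet h⟩

theorem Metric.IsSeparated.card_mul_pow_le {E : Type*} [NormedAddCommGroup E] [NormedSpace ℝ E]
    [FiniteDimensional ℝ E] {ε : ℝ≥0} (hε : 0 < ε) {J : Finset E} (hJ : IsSeparated ε (J : Set E))
    {x : E} {R : ℝ} (hR : 0 ≤ R) (hJR : ↑J ⊆ closedBall x R) :
    J.card * ((ε : ℝ) / 2) ^ Module.finrank ℝ E ≤ (R + ε / 2) ^ Module.finrank ℝ E := by
  borelize E
  set μ : Measure E := Measure.addHaar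
  set r : ℝ := ε / 2 with hr_def
  have hr : 0 < r := by positivity
  have hdisj : (J : Set E).PairwiseDisjoint fun z ↦ ball z r := fun a ha b hb hab ↦
    ball_disjoint_ball (by linarith [hJ.lt_dist ha hb hab, hr_def])
  have hsub : (⋃ z ∈ J, ball z r) ⊆ ball x (R + r) := by
    refine iUnion₂_subset fun z hz ↦ ball_subset_ball' ?_
    linarith [mem_closedBall.1 (hJR hz)]
  have hvol : (J.card : ℝ≥0∞) * (ENNReal.ofReal (r ^ Module.finrank ℝ E) * μ (ball 0 1))
      ≤ ENNReal.ofReal ((R + r) ^ Module.finrank ℝ E) * μ (ball 0 1) :=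
    calc (J.card : ℝ≥0∞) * (ENNReal.ofReal (r ^ Module.finrank ℝ E) * μ (ball 0 1))
        = ∑ z ∈ J, μ (ball z r) := by
          simp [Measure.addHaar_ball_of_pos μ _ hr]
      _ = μ (⋃ z ∈ J, ball z r) := (measure_biUnion_finset hdisj fun _ _ ↦ measurableSet_ball).symm
      _ ≤ μ (ball x (R + r)) := measure_mono hsub
      _ = _ := Measure.addHaar_ball_of_pos μ _ (by positivity)
  rw [← mul_assoc, ENNReal.mul_le_mul_iff_left (measure_ball_pos μ 0 one_pos).ne'
    measure_ball_lt_top.ne, ← ENNReal.ofReal_natCast, ← ENNReal.ofReal_mul (by positivity),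
    ENNReal.ofReal_le_ofReal_iff (by positivity)] at hvol
  exact hvol

theorem JoinedIn.ofReal_le_hausdorffMeasure_inter_closedBall {X : Type*} [MetricSpace X]
    [MeasurableSpace X] [BorelSpace X] {Γ : Set X} {x y : X} (h : JoinedIn Γ x y) {r : ℝ}
    (hr : r ≤ dist y x) : ENNReal.ofReal r ≤ μH[1] (Γ ∩ closedBall x r) := by
  obtain ⟨γ, hγ⟩ := h
  have hlip : LipschitzWith 1 (dist · x) := LipschitzWith.dist_left x
  have hIcc : Icc 0 r ⊆ (dist · x) '' (Γ ∩ closedBall x r) := by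
    intro c hc
    obtain ⟨t, ht⟩ := intermediate_value_univ 0 1 (hlip.continuous.comp γ.continuous)
      (show c ∈ Icc (dist (γ 0) x) (dist (γ 1) x) by simpa using ⟨hc.1, hc.2.trans hr⟩)
    exact ⟨γ t, ⟨hγ t, mem_closedBall.2 (ht.trans_le hc.2)⟩, ht⟩
  calc ENNReal.ofReal r = μH[1] (Icc 0 r) := by simp [hausdorffMeasure_real]
    _ ≤ μH[1] ((dist · x) '' (Γ ∩ closedBall x r)) := measure_mono hIcc
    _ ≤ μH[1] (Γ ∩ closedBall x r) := by
      simpa using hlip.hausdorffMeasure_image_le zero_le_one (Γ ∩ closedBall x r)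

theorem IsPathConnected.card_mul_le_hausdorffMeasure {X : Type*} [MetricSpace X]
    [MeasurableSpace X] [BorelSpace X] {Γ : Set X} (hΓ : IsPathConnected Γ) {ε : ℝ≥0}
    (hεΓ : ε < diam Γ) {J : Finset X} (hJΓ : ↑J ⊆ Γ) (hJ : IsSeparated ε (J : Set X)) :
    J.card * ENNReal.ofReal (ε / 2) ≤ μH[1] Γ := by
  have hdisj : (J : Set X).PairwiseDisjoint fun z ↦ closedBall z (ε / 2) := fun a ha b hb hab ↦
    closedBall_disjoint_closedBall (by linarith [hJ.lt_dist ha hb hab])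
  have hlow (z) (hz : z ∈ J) : ENNReal.ofReal (ε / 2) ≤ μH[1] (Γ ∩ closedBall z (ε / 2)) := by
    obtain ⟨y, hy, hyz⟩ := exists_le_dist_of_two_mul_lt_diam (s := Γ) (r := ε / 2) (by positivity)
      (by linarith) z
    exact (hΓ.joinedIn z (hJΓ hz) y hy).ofReal_le_hausdorffMeasure_inter_closedBall hyz
  -- restricting to `Γ` avoids any measurability assumption on `Γ`
  calc J.card * ENNReal.ofReal (ε / 2) ≤ ∑ z ∈ J, μH[1] (Γ ∩ closedBall z (ε / 2)) := by
        simpa using Finset.sum_le_sum hlow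
    _ = μH[1].restrict Γ (⋃ z ∈ J, closedBall z (ε / 2)) := by
        rw [measure_biUnion_finset hdisj fun _ _ ↦ measurableSet_closedBall]
        simp [Measure.restrict_apply measurableSet_closedBall, inter_comm]
    _ ≤ μH[1] Γ := (measure_mono (subset_univ _)).trans_eq (Measure.restrict_apply_univ Γ)

theorem stmt_3_general (Γ : Set E2) (hΓpc : IsPathConnected Γ)
    (hΓfin : μH[1] Γ < ⊤) (hdiam : 0 < Metric.diam Γ)
    (ρ : ℝ) (hρ : 0 < ρ) (hρd : ρ < Metric.diam Γ) :
    ∃ J : Finset E2, ↑J ⊆ Γ ∧ (Γ ⊆ ⋃ x ∈ J, Metric.closedBall x ρ) ∧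
      (J.card : ℝ) ≤ min (5 * (μH[1] Γ).toReal / ρ) (25 * (Metric.diam Γ) ^ 2 / ρ ^ 2) := by
  have hbdd : Bornology.IsBounded Γ := by
    by_contra h
    simp [diam_eq_zero_of_unbounded h] at hdiam
  obtain ⟨x₀, hx₀⟩ := hΓpc.nonempty
  have hε : (ρ.toNNReal : ℝ) = ρ := Real.coe_toNNReal ρ hρ.le
  obtain ⟨J, hJΓ, hJsep, hJcov⟩ := (hbdd.isCompact_closure.totallyBounded.subset subset_closure)
    |>.exists_finset_isSeparated_isCover (Real.toNNReal_pos.2 hρ).ne'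
  refine ⟨J, hJΓ, by simpa [hε] using hJcov.subset_iUnion_closedBall, le_min ?_ ?_⟩
  · have hH := hΓpc.card_mul_le_hausdorffMeasure (by rwa [hε]) hJΓ hJsep
    rw [hε, ← ENNReal.ofReal_natCast, ← ENNReal.ofReal_mul (by positivity),
      ENNReal.ofReal_le_iff_le_toReal hΓfin.ne] at hH
    rw [le_div_iff₀ hρ]
    nlinarith [ENNReal.toReal_nonneg (a := μH[1] Γ)]
  · have hV := hJsep.card_mul_pow_le (Real.toNNReal_pos.2 hρ) hdiam.le
      (hJΓ.trans fun y hy ↦ mem_closedBall.2 (dist_le_diam_of_mem hbdd hy hx₀))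
    rw [finrank_euclideanSpace_fin, hε] at hV
    rw [le_div_iff₀ (by positivity)]
    nlinarith

theorem stmt_3 (Γ : Set E2) (hΓc : IsCompact Γ) (hΓpc : IsPathConnected Γ)
    (hΓfin : μH[1] Γ < ⊤) (hdiam : 0 < Metric.diam Γ)
    (ρ : ℝ) (hρ : 0 < ρ) (hρd : ρ < Metric.diam Γ) :
    ∃ J : Finset E2, ↑J ⊆ Γ ∧ (Γ ⊆ ⋃ x ∈ J, Metric.closedBall x ρ) ∧
      (J.card : ℝ) ≤ min (5 * (μH[1] Γ).toReal / ρ) (25 * (Metric.diam Γ) ^ 2 / ρ ^ 2) :=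
  stmt_3_general Γ hΓpc hΓfin hdiam ρ hρ hρd
end

section
/- Let Ω ⊆ ℝ² be bounded open, Γ ⊆ Ω closed, ε > 0, and let v ∈ C²(Ω∖Γ) ∩ C⁰(closure(Ω)) satisfy 0 ≤ v ≤ 1 in Ω, −4ε²Δv + v = 0 in Ω∖Γ, and v = 0 on ∂Ω. Then for every x₀ ∈ Ω∖Γ with dist(x₀, Γ) ≥ 12ε, one has v(x₀) ≤ exp( −3·dist(x₀,Γ)/(32ε) ). -/
open MeasureTheory Set Metric
open scoped ENNReal Topology

noncomputable section

/-- The Laplacian of a real-valued function on the plane. -/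
def lap (f : E2 → ℝ) (x : E2) : ℝ :=
  ∑ i : Fin 2, fderiv ℝ (fderiv ℝ f) x (EuclideanSpace.single i 1) (EuclideanSpace.single i 1)

/-!
Comparison with the barrier `ω(x) = exp ((‖x - x₀‖² - R²) / (8εR))`, `R = (3/4) dist(x₀, Γ)`, on
`V = B(x₀, R) ∩ Ω`, which misses `Γ`. Since `R ≥ 9ε`, `4ε² Δω ≤ (1/4 + 2/9) ω < ω`, so `ω` is a strict
supersolution of `-4ε² Δ + 1` on `V`, while `v` is a solution. At an interior maximum of `v - ω` the
second derivatives along the coordinate axes give `Δv ≤ Δω`, hence `v < ω` there; on `∂V`, either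
`ω = 1 ≥ v` (on the sphere) or `v = 0 < ω` (on `∂Ω`). So `v ≤ ω` on `V`, and
`ω(x₀) = exp (-R / (8ε)) = exp (-3 dist(x₀, Γ) / (32ε))`.
-/

open Filter
open scoped RealInnerProductSpace

theorem IsLocalMax.deriv_deriv_nonpos {f : ℝ → ℝ} {x : ℝ} (hmax : IsLocalMax f x)
    (hc : ContinuousAt f x) : deriv (deriv f) x ≤ 0 := by
  by_contra! hpos
  -- `f'' x > 0` would make `x` a local minimum too, so `f` would be locally constant
  have hmin := isLocalMin_of_deriv_deriv_pos hpos hmax.deriv_eq_zero hc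
  have hconst : f =ᶠ[𝓝 x] fun _ => f x :=
    (hmin.and hmax).mono fun y h => le_antisymm h.2 h.1
  have hderiv : deriv f =ᶠ[𝓝 x] fun _ => 0 :=
    hconst.eventuallyEq_nhds.mono fun y hy => by rw [hy.deriv_eq, deriv_const]
  rw [hderiv.deriv_eq, deriv_const] at hpos
  exact hpos.false

section LineRestriction

variable {E : Type*} [NormedAddCommGroup E] [NormedSpace ℝ E] {f : E → ℝ} {z : E}

theorem ContDiffAt.deriv_deriv_comp_add_smul (hf : ContDiffAt ℝ 2 f z) (e : E) :
    deriv (deriv fun t : ℝ => f (z + t • e)) 0 = fderiv ℝ (fderiv ℝ f) z e e := by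
  have hline : ∀ t : ℝ, HasDerivAt (fun s : ℝ => z + s • e) e t := fun t => by
    simpa using ((hasDerivAt_id t).smul_const e).const_add z
  have hcont : Tendsto (fun t : ℝ => z + t • e) (𝓝 0) (𝓝 z) := by
    simpa using (hline 0).continuousAt.tendsto
  have hdiff : ∀ᶠ t in 𝓝 (0 : ℝ), DifferentiableAt ℝ f (z + t • e) :=
    hcont.eventually ((hf.eventually (by simp)).mono fun y hy => hy.differentiableAt two_ne_zero)
  have hderiv : deriv (fun t : ℝ => f (z + t • e)) =ᶠ[𝓝 0] fun t => fderiv ℝ f (z + t • e) e :=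
    hdiff.mono fun t ht => (ht.hasFDerivAt.comp_hasDerivAt t (hline t)).deriv
  rw [hderiv.deriv_eq]
  have hf' : DifferentiableAt ℝ (fderiv ℝ f) z :=
    (hf.fderiv_right (m := 1) (by norm_num)).differentiableAt one_ne_zero
  exact ((ContinuousLinearMap.apply ℝ ℝ e).hasFDerivAt.comp_hasDerivAt 0
    (hf'.hasFDerivAt.comp_hasDerivAt_of_eq 0 (hline 0) (by simp))).deriv

theorem IsLocalMax.fderiv_fderiv_apply_self_nonpos (hmax : IsLocalMax f z)
    (hf : ContDiffAt ℝ 2 f z) (e : E) : fderiv ℝ (fderiv ℝ f) z e e ≤ 0 := by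
  have hline : Continuous fun t : ℝ => z + t • e := by fun_prop
  rw [← hf.deriv_deriv_comp_add_smul]
  refine IsLocalMax.deriv_deriv_nonpos ?_ (hf.continuousAt.comp_of_eq hline.continuousAt (by simp))
  exact IsLocalMax.comp_continuous (g := fun t : ℝ => z + t • e) (by simpa using hmax)
    hline.continuousAt

theorem ContDiffAt.fderiv_fderiv_sub {u w : E → ℝ} (hu : ContDiffAt ℝ 2 u z)
    (hw : ContDiffAt ℝ 2 w z) :
    fderiv ℝ (fderiv ℝ (u - w)) z = fderiv ℝ (fderiv ℝ u) z - fderiv ℝ (fderiv ℝ w) z := by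
  have hsub : fderiv ℝ (u - w) =ᶠ[𝓝 z] fderiv ℝ u - fderiv ℝ w :=
    ((hu.eventually (by simp)).and (hw.eventually (by simp))).mono fun y hy =>
      fderiv_sub (hy.1.differentiableAt two_ne_zero) (hy.2.differentiableAt two_ne_zero)
  rw [hsub.fderiv_eq]
  exact fderiv_sub ((hu.fderiv_right (m := 1) (by norm_num)).differentiableAt one_ne_zero)
    ((hw.fderiv_right (m := 1) (by norm_num)).differentiableAt one_ne_zero)

end LineRestriction

theorem lap_le_lap_of_isLocalMax_sub {u w : E2 → ℝ} {z : E2} (hu : ContDiffAt ℝ 2 u z)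
    (hw : ContDiffAt ℝ 2 w z) (hmax : IsLocalMax (u - w) z) : lap u z ≤ lap w z := by
  refine Finset.sum_le_sum fun i _ => ?_
  have := hmax.fderiv_fderiv_apply_self_nonpos (hu.sub hw) (EuclideanSpace.single i 1)
  rw [hu.fderiv_fderiv_sub hw] at this
  simpa [sub_nonpos] using this

theorem le_of_lap_comparison {V : Set E2} (hVo : IsOpen V) (hVb : Bornology.IsBounded V)
    {κ : ℝ} (hκ : 0 ≤ κ) {u w : E2 → ℝ} (hu : ContDiffOn ℝ 2 u V) (hw : ContDiffOn ℝ 2 w V)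
    (huc : ContinuousOn u (closure V)) (hwc : ContinuousOn w (closure V))
    (hlap : ∀ x ∈ V, u x - κ * lap u x < w x - κ * lap w x)
    (hfr : ∀ x ∈ frontier V, u x ≤ w x) {x : E2} (hx : x ∈ V) : u x ≤ w x := by
  obtain ⟨z, hzV, hzmax⟩ := hVb.isCompact_closure.exists_isMaxOn
    ⟨x, subset_closure hx⟩ (huc.sub hwc)
  have hxz : u x - w x ≤ u z - w z := hzmax (subset_closure hx)
  suffices u z - w z ≤ 0 by linarith
  by_cases hz : z ∈ V
  · have hzu := hu.contDiffAt (hVo.mem_nhds hz)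
    have hzw := hw.contDiffAt (hVo.mem_nhds hz)
    have hloc : IsLocalMax (u - w) z :=
      Filter.mem_of_superset (hVo.mem_nhds hz) fun y hy => hzmax (subset_closure hy)
    nlinarith [hlap z hz, lap_le_lap_of_isLocalMax_sub hzu hzw hloc]
  · linarith [hfr z (hVo.frontier_eq ▸ ⟨hzV, hz⟩)]

section Barrier

variable {F : Type*} [NormedAddCommGroup F] (x₀ : F) (c R : ℝ)

def gaussianBarrier (x : F) : ℝ :=
  Real.exp (c * (‖x - x₀‖ ^ 2 - R ^ 2))

theorem gaussianBarrier_pos (x : F) : 0 < gaussianBarrier x₀ c R x := Real.exp_pos _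

theorem gaussianBarrier_self : gaussianBarrier x₀ c R x₀ = Real.exp (-(c * R ^ 2)) := by
  simp [gaussianBarrier]

theorem gaussianBarrier_of_mem_sphere {x : F} (hx : x ∈ sphere x₀ R) :
    gaussianBarrier x₀ c R x = 1 := by
  rw [mem_sphere, dist_eq_norm] at hx
  simp [gaussianBarrier, hx]

theorem le_gaussianBarrier_of_mem_frontier {Ω : Set F} (hΩo : IsOpen Ω) {v : F → ℝ}
    (hle : ∀ x ∈ Ω, v x ≤ 1) (hbdry : ∀ x ∈ frontier Ω, v x = 0) {x : F}
    (hx : x ∈ frontier (ball x₀ R ∩ Ω)) : v x ≤ gaussianBarrier x₀ c R x := by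
  rcases frontier_inter_subset _ _ hx with ⟨hxs, hxΩ⟩ | ⟨-, hxΩ⟩
  · rw [gaussianBarrier_of_mem_sphere x₀ c R (frontier_ball_subset_sphere hxs)]
    by_cases hxΩ' : x ∈ Ω
    · exact hle x hxΩ'
    · rw [hbdry x (hΩo.frontier_eq ▸ ⟨hxΩ, hxΩ'⟩)]
      exact zero_le_one
  · rw [hbdry x hxΩ]
    exact (gaussianBarrier_pos x₀ c R x).le

variable [InnerProductSpace ℝ F]

theorem contDiff_gaussianBarrier {n : WithTop ℕ∞} : ContDiff ℝ n (gaussianBarrier x₀ c R) :=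
  Real.contDiff_exp.comp (contDiff_const.mul
    (((contDiff_norm_sq ℝ).comp (contDiff_id.sub contDiff_const)).sub contDiff_const))

theorem gaussianBarrier_add_smul (z e : F) (t : ℝ) :
    gaussianBarrier x₀ c R (z + t • e) =
      Real.exp (c * (‖z - x₀‖ ^ 2 + 2 * ⟪z - x₀, e⟫ * t + ‖e‖ ^ 2 * t ^ 2 - R ^ 2)) := by
  rw [gaussianBarrier, add_sub_right_comm, norm_add_sq_real, inner_smul_right, norm_smul,
    Real.norm_eq_abs, mul_pow, sq_abs]
  ring_nf

theorem fderiv_fderiv_gaussianBarrier_apply (z e : F) :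
    fderiv ℝ (fderiv ℝ (gaussianBarrier x₀ c R)) z e e =
      gaussianBarrier x₀ c R z * (4 * c ^ 2 * ⟪z - x₀, e⟫ ^ 2 + 2 * c * ‖e‖ ^ 2) := by
  set a := ‖z - x₀‖ ^ 2
  set b := ⟪z - x₀, e⟫
  set q := ‖e‖ ^ 2
  have hp : ∀ t : ℝ, HasDerivAt (fun s => c * (a + 2 * b * s + q * s ^ 2 - R ^ 2))
      (c * (2 * b + 2 * q * t)) t := fun t => by
    refine ((((hasDerivAt_id t).const_mul (2 * b)).const_add a |>.add
      ((hasDerivAt_pow 2 t).const_mul q) |>.sub_const (R ^ 2)).const_mul c).congr_deriv ?_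
    simp only [Nat.cast_ofNat]
    ring
  have hfirst : deriv (fun t : ℝ => gaussianBarrier x₀ c R (z + t • e)) =
      fun t => Real.exp (c * (a + 2 * b * t + q * t ^ 2 - R ^ 2)) * (c * (2 * b + 2 * q * t)) := by
    funext t
    simp only [gaussianBarrier_add_smul]
    exact (hp t).exp.deriv
  have hsecond : HasDerivAt
      (fun t : ℝ => Real.exp (c * (a + 2 * b * t + q * t ^ 2 - R ^ 2)) * (c * (2 * b + 2 * q * t)))
      (gaussianBarrier x₀ c R z * (4 * c ^ 2 * b ^ 2 + 2 * c * q)) 0 := by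
    refine ((hp 0).exp.mul
      ((((hasDerivAt_id (0 : ℝ)).const_mul (2 * q)).const_add (2 * b)).const_mul c)).congr_deriv ?_
    have hz : gaussianBarrier x₀ c R z = Real.exp (c * (a + 2 * b * 0 + q * 0 ^ 2 - R ^ 2)) := by
      simp [gaussianBarrier, a]
    rw [hz, id]
    ring
  rw [← (contDiff_gaussianBarrier x₀ c R).contDiffAt.deriv_deriv_comp_add_smul, hfirst,
    hsecond.deriv]

end Barrier

theorem lap_gaussianBarrier (x₀ : E2) (c R : ℝ) (z : E2) :
    lap (gaussianBarrier x₀ c R) z =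
      gaussianBarrier x₀ c R z * (4 * c ^ 2 * ‖z - x₀‖ ^ 2 + 4 * c) := by
  simp only [lap, fderiv_fderiv_gaussianBarrier_apply, Fin.sum_univ_two,
    EuclideanSpace.inner_single_right, PiLp.norm_single, EuclideanSpace.real_norm_sq_eq,
    PiLp.sub_apply, Real.ringHom_apply, one_mul, norm_one, one_pow, mul_one]
  ring

theorem sub_mul_lap_gaussianBarrier_pos {ε R : ℝ} (hε : 0 < ε) (hR : 9 * ε ≤ R) (x₀ : E2)
    {z : E2} (hz : ‖z - x₀‖ ≤ R) :
    0 < gaussianBarrier x₀ (1 / (8 * ε * R)) R z -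
      4 * ε ^ 2 * lap (gaussianBarrier x₀ (1 / (8 * ε * R)) R) z := by
  have hRpos : 0 < R := by linarith
  set c := 1 / (8 * ε * R)
  have hc : 8 * ε * R * c = 1 := mul_one_div_cancel (by positivity)
  have hquad : 4 * ε ^ 2 * (4 * c ^ 2 * ‖z - x₀‖ ^ 2) ≤ 1 / 4 :=
    calc 4 * ε ^ 2 * (4 * c ^ 2 * ‖z - x₀‖ ^ 2) ≤ 4 * ε ^ 2 * (4 * c ^ 2 * R ^ 2) := by gcongr
      _ = (8 * ε * R * c) ^ 2 / 4 := by ring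
      _ = 1 / 4 := by rw [hc]; norm_num
  have hlin : 4 * ε ^ 2 * (4 * c) ≤ 2 / 9 :=
    calc 4 * ε ^ 2 * (4 * c) = 2 * ε / R * (8 * ε * R * c) := by field_simp; ring
      _ = 2 * ε / R := by rw [hc, mul_one]
      _ ≤ 2 / 9 := by rw [div_le_iff₀ hRpos]; linarith
  rw [lap_gaussianBarrier]
  nlinarith [gaussianBarrier_pos x₀ c R z]

theorem stmt_10_general (Ω : Set E2) (hΩo : IsOpen Ω)
    (Γ : Set E2) (ε : ℝ) (hε : 0 < ε)
    (v : E2 → ℝ) (hvC2 : ContDiffOn ℝ 2 v (Ω \ Γ)) (hvC0 : ContinuousOn v (closure Ω))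
    (hbd : ∀ x ∈ Ω, 0 ≤ v x ∧ v x ≤ 1)
    (heq : ∀ x ∈ Ω \ Γ, -4 * ε ^ 2 * lap v x + v x = 0)
    (hbdry : ∀ x ∈ frontier Ω, v x = 0)
    (x₀ : E2) (hx₀ : x₀ ∈ Ω \ Γ) (hdist : 12 * ε ≤ Metric.infDist x₀ Γ) :
    v x₀ ≤ Real.exp (-3 * Metric.infDist x₀ Γ / (32 * ε)) := by
  set R := 3 / 4 * infDist x₀ Γ with hRdef
  have hR : 9 * ε ≤ R := by linarith
  set ω := gaussianBarrier x₀ (1 / (8 * ε * R)) R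
  have hωC2 : ContDiff ℝ 2 ω := contDiff_gaussianBarrier _ _ _
  set V := ball x₀ R ∩ Ω
  have hVΓ : V ⊆ Ω \ Γ := fun y hy => ⟨hy.2, fun hyΓ => disjoint_ball_infDist.ne_of_mem
    (ball_subset_ball (by linarith) hy.1) hyΓ rfl⟩
  have hvω : v x₀ ≤ ω x₀ := by
    refine le_of_lap_comparison (isOpen_ball.inter hΩo) (isBounded_ball.subset inter_subset_left)
      (κ := 4 * ε ^ 2) (by positivity) (hvC2.mono hVΓ) hωC2.contDiffOn
      (hvC0.mono (closure_mono inter_subset_right)) hωC2.continuous.continuousOn (fun x hx => ?_)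
      (fun x => le_gaussianBarrier_of_mem_frontier x₀ _ R hΩo (fun y hy => (hbd y hy).2) hbdry)
      ⟨mem_ball_self (by linarith), hx₀.1⟩
    have hωx := sub_mul_lap_gaussianBarrier_pos hε hR x₀ (z := x)
      (by rw [← dist_eq_norm]; exact (mem_ball.mp hx.1).le)
    linarith [heq x (hVΓ hx)]
  calc v x₀ ≤ ω x₀ := hvω
    _ = Real.exp (-3 * infDist x₀ Γ / (32 * ε)) := by
      rw [show ω x₀ = _ from gaussianBarrier_self _ _ _]
      congr 1
      field_simp
      ring

theorem stmt_10 (Ω : Set E2) (hΩo : IsOpen Ω) (hΩb : Bornology.IsBounded Ω)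
    (Γ : Set E2) (hΓcl : IsClosed Γ) (hΓΩ : Γ ⊆ Ω) (ε : ℝ) (hε : 0 < ε)
    (v : E2 → ℝ) (hvC2 : ContDiffOn ℝ 2 v (Ω \ Γ)) (hvC0 : ContinuousOn v (closure Ω))
    (hbd : ∀ x ∈ Ω, 0 ≤ v x ∧ v x ≤ 1)
    (heq : ∀ x ∈ Ω \ Γ, -4 * ε ^ 2 * lap v x + v x = 0)
    (hbdry : ∀ x ∈ frontier Ω, v x = 0)
    (x₀ : E2) (hx₀ : x₀ ∈ Ω \ Γ) (hdist : 12 * ε ≤ Metric.infDist x₀ Γ) :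
    v x₀ ≤ Real.exp (-3 * Metric.infDist x₀ Γ / (32 * ε)) :=
  stmt_10_general Ω hΩo Γ ε hε v hvC2 hvC0 hbd heq hbdry x₀ hx₀ hdist
end
end

section
/- Let t ∈ (0,1), δ > 0, τ > 0, a₀, x* ∈ ℝ² with x* ≠ a₀ and τ ≤ |x*−a₀|, and let Ω₀ ⊆ ℝ² be a compact convex set containing a₀ and x*. Suppose u : Ω₀ → [0,1] satisfies u ≥ t on the closed ball B̄(x*,τ) ∩ Ω₀. Then D(δ+u²; a₀, x*) ≥ t²·τ. -/
open MeasureTheory Set Metric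
open scoped ENNReal NNReal Topology

noncomputable section

/-- The generalized geodesic distance relative to the conformal metric `w`. -/
def geoDist (S : Set E2) (w : E2 → ℝ) (a b : E2) : ℝ :=
  sInf {L : ℝ | ∃ γ : ℝ → E2, (∃ K : ℝ≥0, LipschitzWith K γ) ∧
    γ '' Icc (0:ℝ) 1 ⊆ S ∧ γ 0 = a ∧ γ 1 = b ∧
    L = ∫ x in γ '' Icc (0:ℝ) 1, w x ∂μH[1]}

/-! Any admissible curve from `a₀` to `x*` has to cross the closed ball `B̄(x*, τ)`, and the part
of it inside the ball has Hausdorff length at least `τ`, since `dist · x*` is `1`-Lipschitz and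
takes every value of `[0, τ]` on it. On that part the weight `δ + u²` is at least `t²`. -/

theorem LipschitzWith.hausdorffMeasure_one_image_Icc_lt_top {X : Type*} [EMetricSpace X]
    [MeasurableSpace X] [BorelSpace X] {K : ℝ≥0} {γ : ℝ → X} (hγ : LipschitzWith K γ)
    (a b : ℝ) : μH[1] (γ '' Icc a b) < ∞ :=
  calc μH[1] (γ '' Icc a b) ≤ (K : ℝ≥0∞) ^ (1 : ℝ) * μH[1] (Icc a b) :=
        hγ.hausdorffMeasure_image_le zero_le_one _
    _ < ∞ := by
        rw [hausdorffMeasure_real, Real.volume_Icc]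
        exact ENNReal.mul_lt_top (by simp) ENNReal.ofReal_lt_top

theorem LipschitzWith.volume_image_le_hausdorffMeasure_one {X : Type*} [EMetricSpace X]
    [MeasurableSpace X] [BorelSpace X] {f : X → ℝ} (hf : LipschitzWith 1 f) (s : Set X) :
    volume (f '' s) ≤ μH[1] s := by
  simpa [hausdorffMeasure_real] using hf.hausdorffMeasure_image_le zero_le_one s

section Curve

variable {X : Type*} [MetricSpace X] [MeasurableSpace X] [BorelSpace X]

theorem ofReal_le_hausdorffMeasure_image_Icc_inter_closedBall {γ : ℝ → X} {a b r : ℝ}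
    (hab : a ≤ b) (hγ : ContinuousOn γ (Icc a b)) {x : X} (hr : r ≤ dist (γ a) x)
    (hγb : γ b = x) : ENNReal.ofReal r ≤ μH[1] (γ '' Icc a b ∩ closedBall x r) := by
  have hIcc : Icc 0 r ⊆ (dist · x) '' (γ '' Icc a b ∩ closedBall x r) := by
    intro y hy
    have hy' : y ∈ Icc (dist (γ b) x) (dist (γ a) x) := by
      rw [hγb, dist_self]
      exact ⟨hy.1, hy.2.trans hr⟩
    obtain ⟨s, hs, hsy : dist (γ s) x = y⟩ :=
      intermediate_value_Icc' hab ((continuous_id.dist continuous_const).comp_continuousOn hγ) hy'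
    exact ⟨γ s, ⟨mem_image_of_mem γ hs, by rw [mem_closedBall, hsy]; exact hy.2⟩, hsy⟩
  calc ENNReal.ofReal r = volume (Icc 0 r) := by rw [Real.volume_Icc, sub_zero]
    _ ≤ volume ((dist · x) '' (γ '' Icc a b ∩ closedBall x r)) := measure_mono hIcc
    _ ≤ μH[1] (γ '' Icc a b ∩ closedBall x r) :=
        (LipschitzWith.dist_left x).volume_image_le_hausdorffMeasure_one _

theorem mul_le_setIntegral_image_Icc_of_le_on_closedBall {γ : ℝ → X} {K : ℝ≥0}
    (hγ : LipschitzWith K γ) {x : X} {r c M : ℝ} (hr : r ≤ dist (γ 0) x) (hγ1 : γ 1 = x)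
    {w : X → ℝ} (hw : Measurable w) (hc : 0 ≤ c)
    (hw_bdd : ∀ y ∈ γ '' Icc 0 1, 0 ≤ w y ∧ w y ≤ M)
    (hw_ball : ∀ y ∈ γ '' Icc 0 1 ∩ closedBall x r, c ≤ w y) :
    c * r ≤ ∫ y in γ '' Icc 0 1, w y ∂μH[1] := by
  set C := γ '' Icc (0 : ℝ) 1
  have hC : MeasurableSet C := (isCompact_Icc.image hγ.continuous).measurableSet
  have hC_fin : μH[1] C < ∞ := hγ.hausdorffMeasure_one_image_Icc_lt_top 0 1
  have hB_fin : μH[1] (C ∩ closedBall x r) ≠ ∞ :=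
    (measure_mono inter_subset_left |>.trans_lt hC_fin).ne
  have hr_le : r ≤ μH[1].real (C ∩ closedBall x r) :=
    (ENNReal.ofReal_le_iff_le_toReal hB_fin).mp <|
      ofReal_le_hausdorffMeasure_image_Icc_inter_closedBall zero_le_one
        hγ.continuous.continuousOn hr hγ1
  have hw_int : IntegrableOn w C μH[1] :=
    Measure.integrableOn_of_bounded hC_fin.ne hw.aestronglyMeasurable <|
      ae_restrict_of_forall_mem hC fun y hy => by
        rw [Real.norm_of_nonneg (hw_bdd y hy).1]; exact (hw_bdd y hy).2
  calc c * r ≤ c * μH[1].real (C ∩ closedBall x r) := mul_le_mul_of_nonneg_left hr_le hc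
    _ ≤ ∫ y in C ∩ closedBall x r, w y ∂μH[1] :=
        setIntegral_ge_of_const_le_real (hC.inter measurableSet_closedBall) hB_fin hw_ball
          (hw_int.mono_set inter_subset_left)
    _ ≤ ∫ y in C, w y ∂μH[1] :=
        setIntegral_mono_set hw_int (ae_restrict_of_forall_mem hC fun y hy => (hw_bdd y hy).1)
          inter_subset_left.eventuallyLE

end Curve

theorem le_geoDist_of_convex {S : Set E2} (hS : Convex ℝ S) {a b : E2} (ha : a ∈ S) (hb : b ∈ S)
    {w : E2 → ℝ} {c : ℝ}
    (hc : ∀ γ : ℝ → E2, ∀ K : ℝ≥0, LipschitzWith K γ → γ '' Icc 0 1 ⊆ S → γ 0 = a → γ 1 = b →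
      c ≤ ∫ y in γ '' Icc 0 1, w y ∂μH[1]) :
    c ≤ geoDist S w a b := by
  refine le_csInf ⟨_, AffineMap.lineMap a b, ⟨_, lipschitzWith_lineMap a b⟩, ?_,
    AffineMap.lineMap_apply_zero a b, AffineMap.lineMap_apply_one a b, rfl⟩ ?_
  · rw [← segment_eq_image_lineMap]
    exact hS.segment_subset ha hb
  · rintro L ⟨γ, ⟨K, hγ⟩, hγS, hγ0, hγ1, rfl⟩
    exact hc γ K hγ hγS hγ0 hγ1

theorem stmt_14_general (t δ τ : ℝ) (ht0 : 0 < t) (hδ : 0 < δ)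
    (a₀ xstar : E2) (hτd : τ ≤ dist xstar a₀)
    (Ω₀ : Set E2) (hΩconv : Convex ℝ Ω₀)
    (ha₀ : a₀ ∈ Ω₀) (hxstar : xstar ∈ Ω₀)
    (u : E2 → ℝ) (humeas : Measurable u) (hubd : ∀ y ∈ Ω₀, 0 ≤ u y ∧ u y ≤ 1)
    (hlow : ∀ y ∈ Metric.closedBall xstar τ ∩ Ω₀, t ≤ u y) :
    t ^ 2 * τ ≤ geoDist Ω₀ (fun y => δ + u y ^ 2) a₀ xstar := by
  refine le_geoDist_of_convex hΩconv ha₀ hxstar fun γ K hγ hγΩ hγ0 hγ1 => ?_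
  refine mul_le_setIntegral_image_Icc_of_le_on_closedBall hγ (M := δ + 1)
    (by rwa [hγ0, dist_comm]) hγ1 (humeas.pow_const 2 |>.const_add δ) (sq_nonneg t)
    (fun y hy => ?_) (fun y hy => ?_)
  · obtain ⟨hu0, hu1⟩ := hubd y (hγΩ hy)
    constructor <;> nlinarith
  · have := hlow y ⟨hy.2, hγΩ hy.1⟩
    nlinarith

theorem stmt_14 (t δ τ : ℝ) (ht0 : 0 < t) (ht1 : t < 1) (hδ : 0 < δ) (hτ : 0 < τ)
    (a₀ xstar : E2) (hne : xstar ≠ a₀) (hτd : τ ≤ dist xstar a₀)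
    (Ω₀ : Set E2) (hΩc : IsCompact Ω₀) (hΩconv : Convex ℝ Ω₀)
    (ha₀ : a₀ ∈ Ω₀) (hxstar : xstar ∈ Ω₀)
    (u : E2 → ℝ) (humeas : Measurable u) (hubd : ∀ y ∈ Ω₀, 0 ≤ u y ∧ u y ≤ 1)
    (hlow : ∀ y ∈ Metric.closedBall xstar τ ∩ Ω₀, t ≤ u y) :
    t ^ 2 * τ ≤ geoDist Ω₀ (fun y => δ + u y ^ 2) a₀ xstar :=
  stmt_14_general t δ τ ht0 hδ a₀ xstar hτd Ω₀ hΩconv ha₀ hxstar u humeas hubd hlow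
end
end
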